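/- Optimal predictor representation: For the HMM(μ,A,C) and the dual optimal control problem min_{U∈𝒰} J_T(U;F) subject to the BSΔE constraint, there exists an optimal control U^opt such that the conditional expectation satisfies π_T(F) := E[F(X_T) | Z_1,...,Z_T] = μ(Y_0^opt) − ∑_{t=0}^{T-1} (U_t^opt)ᵀ e(Z_{t+1}) almost surely, and the optimal cost equals the minimum mean squared error: J_T(U^opt;F) = E[|F(X_T) − π_T(F)|²]. -/
import Mathlib


open Finset

/-- Lattice embedding: `e i` is the `i`-th canonical basis vector of `ℝ^m` for
`1 ≤ i ≤ m`, and `e 0 = -(e 1 + ⋯ + e m)`. -/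
def eVec (m : ℕ) (z : Fin (m + 1)) : Fin m → ℝ :=
  fun j => if z.val = 0 then -1 else if z.val = j.val + 1 then 1 else 0

/-- Restriction of a path to its first `t` coordinates. -/
def restrict {T : ℕ} {α : Type*} (zp : Fin T → α) (t : ℕ) (ht : t ≤ T) : Fin t → α :=
  fun s => zp ⟨s.val, lt_of_lt_of_le s.isLt ht⟩

/-- Joint law of `HMM(μ₀, A, C)` (`zp t` stands for `Z_{t+1}`, emitted from `X_t`). -/
noncomputable def hmmJoint (d m T : ℕ) (μ0 : Fin d → ℝ)
    (A : Matrix (Fin d) (Fin d) ℝ) (C : Fin d → Fin (m + 1) → ℝ)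
    (xp : Fin (T + 1) → Fin d) (zp : Fin T → Fin (m + 1)) : ℝ :=
  μ0 (xp 0) * (∏ t : Fin T, A (xp t.castSucc) (xp t.succ)) *
    ∏ t : Fin T, C (xp t.castSucc) (zp t)

/-- `c(x)_i = C(x,i) - C(x,0)`. -/
noncomputable def cvec (d m : ℕ) (C : Fin d → Fin (m + 1) → ℝ) (x : Fin d) : Fin m → ℝ :=
  fun i => C x i.succ - C x 0

/-- `R(x) = diag(c(x)) + C(x,0)(I + 𝟏𝟏ᵀ) - c(x)c(x)ᵀ`. -/
noncomputable def Rmat (d m : ℕ) (C : Fin d → Fin (m + 1) → ℝ) (x : Fin d)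
    (i j : Fin m) : ℝ :=
  (if i = j then cvec d m C x i else 0) + C x 0 * ((if i = j then 1 else 0) + 1) -
    cvec d m C x i * cvec d m C x j

/-- Carré du champ: `(Γf)(x) = ∑_y A(x,y) f(y)² - ((Af)(x))²`. -/
noncomputable def Gamma (d : ℕ) (A : Matrix (Fin d) (Fin d) ℝ)
    (f : Fin d → ℝ) (x : Fin d) : ℝ :=
  (∑ y, A x y * (f y) ^ 2) - (∑ y, A x y * f y) ^ 2

/-- Running cost `ℓ(y,v,u;x) = (Γy)(x) + (u + v(x))ᵀ R(x) (u + v(x))`. -/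
noncomputable def ell (d m : ℕ) (A : Matrix (Fin d) (Fin d) ℝ)
    (C : Fin d → Fin (m + 1) → ℝ) (y : Fin d → ℝ) (v : Fin d → Fin m → ℝ)
    (u : Fin m → ℝ) (x : Fin d) : ℝ :=
  Gamma d A y x + ∑ i, ∑ j, (u i + v x i) * Rmat d m C x i j * (u j + v x j)

/-- Dual control cost `J_T(U;F) = var(Y_0(X_0)) + E[∑_t ℓ(Y_{t+1},V_t,U_t;X_t)]`
evaluated along a BSΔE solution `(Y,V)` associated with the control `U`. -/
noncomputable def Jcost (d m T : ℕ) (μ0 : Fin d → ℝ)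
    (A : Matrix (Fin d) (Fin d) ℝ) (C : Fin d → Fin (m + 1) → ℝ)
    (U : (t : ℕ) → (Fin t → Fin (m + 1)) → Fin m → ℝ)
    (Y : (t : ℕ) → (Fin t → Fin (m + 1)) → Fin d → ℝ)
    (V : (t : ℕ) → (Fin t → Fin (m + 1)) → Fin d → Fin m → ℝ) : ℝ :=
  ((∑ x, μ0 x * (Y 0 (fun i => i.elim0) x) ^ 2) -
      (∑ x, μ0 x * Y 0 (fun i => i.elim0) x) ^ 2) +
    ∑ xp : Fin (T + 1) → Fin d, ∑ zp : Fin T → Fin (m + 1),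
      hmmJoint d m T μ0 A C xp zp *
        ∑ t : Fin T,
          ell d m A C (Y (t.val + 1) (restrict zp (t.val + 1) t.isLt))
            (V t.val (restrict zp t.val t.isLt.le))
            (U t.val (restrict zp t.val t.isLt.le)) (xp t.castSucc)

/-- The BSΔE constraint with terminal condition `F` for the triple `(U,Y,V)`. -/
def SolvesBSDE (d m T : ℕ) (A : Matrix (Fin d) (Fin d) ℝ)
    (C : Fin d → Fin (m + 1) → ℝ)
    (U : (t : ℕ) → (Fin t → Fin (m + 1)) → Fin m → ℝ)
    (Y : (t : ℕ) → (Fin t → Fin (m + 1)) → Fin d → ℝ)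
    (V : (t : ℕ) → (Fin t → Fin (m + 1)) → Fin d → Fin m → ℝ)
    (F : (Fin T → Fin (m + 1)) → Fin d → ℝ) : Prop :=
  Y T = F ∧
  ∀ (zp : Fin T → Fin (m + 1)) (t : Fin T) (x : Fin d),
    Y t.val (restrict zp t.val t.isLt.le) x =
      (∑ y, A x y * Y (t.val + 1) (restrict zp (t.val + 1) t.isLt) y) +
      (∑ i, cvec d m C x i *
        (U t.val (restrict zp t.val t.isLt.le) i +
         V t.val (restrict zp t.val t.isLt.le) x i)) -
      ∑ i, V t.val (restrict zp t.val t.isLt.le) x i * eVec m (zp t) i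

/-- Probability of the observation path `zp = (z_1,…,z_T)`. -/
noncomputable def PZ (d m T : ℕ) (μ0 : Fin d → ℝ) (A : Matrix (Fin d) (Fin d) ℝ)
    (C : Fin d → Fin (m + 1) → ℝ) (zp : Fin T → Fin (m + 1)) : ℝ :=
  ∑ xp : Fin (T + 1) → Fin d, hmmJoint d m T μ0 A C xp zp

/-- Terminal conditional expectation `π_T(F) = E[F(X_T) ∣ Z_1,…,Z_T]`. -/
noncomputable def piT (d m T : ℕ) (μ0 : Fin d → ℝ) (A : Matrix (Fin d) (Fin d) ℝ)
    (C : Fin d → Fin (m + 1) → ℝ) (F : (Fin T → Fin (m + 1)) → Fin d → ℝ)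
    (zp : Fin T → Fin (m + 1)) : ℝ :=
  (∑ xp : Fin (T + 1) → Fin d,
      hmmJoint d m T μ0 A C xp zp * F zp (xp (Fin.last T))) /
    PZ d m T μ0 A C zp

section Lemmas

lemma restrict_restrict {T t s : ℕ} {α : Type*} (zp : Fin T → α) (ht : t ≤ T) (hs : s ≤ t) :
    restrict (restrict zp t ht) s hs = restrict zp s (hs.trans ht) := rfl

lemma restrict_all {T : ℕ} {α : Type*} (zp : Fin T → α) (h : T ≤ T) : restrict zp T h = zp := by
  funext s; simp [_root_.restrict]

lemma restrict_snoc {T : ℕ} {α : Type*} (zp : Fin T → α) (z : α) (s : ℕ) (hs : s ≤ T)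
    (hs' : s ≤ T + 1) :
    restrict (Fin.snoc zp z) s hs' = restrict zp s hs := by
  funext k
  have h1 : (⟨k.val, lt_of_lt_of_le k.isLt hs'⟩ : Fin (T+1))
      = Fin.castSucc ⟨k.val, lt_of_lt_of_le k.isLt hs⟩ := rfl
  show (Fin.snoc zp z : Fin (T+1) → α) ⟨k.val, lt_of_lt_of_le k.isLt hs'⟩ = zp ⟨k.val, lt_of_lt_of_le k.isLt hs⟩
  rw [h1, Fin.snoc_castSucc]

lemma restrict_last {T : ℕ} {α : Type*} (zp : Fin (T+1) → α) (h : T ≤ T + 1) :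
    restrict zp T h = Fin.init zp := rfl

lemma sum_snoc {n : ℕ} {β : Type*} [Fintype β] (f : (Fin (n+1) → β) → ℝ) :
    ∑ g : Fin (n+1) → β, f g = ∑ g : Fin n → β, ∑ a : β, f (Fin.snoc g a) := by
  rw [← Equiv.sum_comp (Fin.snocEquiv (fun _ => β)) f, Fintype.sum_prod_type]
  rw [Finset.sum_comm]
  rfl

lemma hmmJoint_snoc (d m T : ℕ) (μ0 : Fin d → ℝ) (A : Matrix (Fin d) (Fin d) ℝ)
    (C : Fin d → Fin (m+1) → ℝ) (xp : Fin (T+1) → Fin d) (zp : Fin T → Fin (m+1))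
    (y : Fin d) (z : Fin (m+1)) :
    hmmJoint d m (T+1) μ0 A C (Fin.snoc xp y) (Fin.snoc zp z)
      = hmmJoint d m T μ0 A C xp zp * (A (xp (Fin.last T)) y * C (xp (Fin.last T)) z) := by
  unfold hmmJoint
  rw [Fin.prod_univ_castSucc
      (f := fun t : Fin (T+1) => A ((Fin.snoc xp y : Fin (T+2) → Fin d) t.castSucc)
        ((Fin.snoc xp y : Fin (T+2) → Fin d) t.succ)),
    Fin.prod_univ_castSucc
      (f := fun t : Fin (T+1) => C ((Fin.snoc xp y : Fin (T+2) → Fin d) t.castSucc)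
        ((Fin.snoc zp z : Fin (T+1) → Fin (m+1)) t))]
  have h0 : (Fin.snoc xp y : Fin (T+2) → Fin d) 0 = xp 0 := by
    have : (0 : Fin (T+2)) = Fin.castSucc 0 := rfl
    rw [this, Fin.snoc_castSucc]
  simp only [Fin.succ_castSucc, Fin.snoc_castSucc, Fin.snoc_last, Fin.succ_last, h0]
  ring

end Lemmas
section Lemmas2

lemma eVec_zero (m : ℕ) (i : Fin m) : eVec m 0 i = -1 := rfl

lemma eVec_succ (m : ℕ) (k : Fin m) (i : Fin m) :
    eVec m k.succ i = if k = i then 1 else 0 := by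
  simp [eVec, Fin.ext_iff]

lemma expec_e (d m : ℕ) (C : Fin d → Fin (m+1) → ℝ) (x : Fin d) (i : Fin m) :
    ∑ z : Fin (m+1), C x z * eVec m z i = cvec d m C x i := by
  rw [Fin.sum_univ_succ]
  simp [eVec_zero, eVec_succ, cvec, mul_ite]
  ring

lemma e2mom (d m : ℕ) (C : Fin d → Fin (m+1) → ℝ) (x : Fin d) (i j : Fin m) :
    ∑ z : Fin (m+1), C x z * (eVec m z i * eVec m z j)
      = C x 0 + if i = j then C x i.succ else 0 := by
  rw [Fin.sum_univ_succ]
  rcases eq_or_ne i j with h|h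
  · subst h; simp [eVec_zero, eVec_succ, mul_ite, ite_mul]
  · simp [eVec_zero, eVec_succ, h, mul_ite, ite_mul, Finset.sum_ite_eq]
    intro hij; exact absurd hij.symm h

lemma covij (d m : ℕ) (C : Fin d → Fin (m+1) → ℝ) (x : Fin d)
    (hC1 : ∑ z, C x z = 1) (i j : Fin m) :
    ∑ z : Fin (m+1), C x z * ((eVec m z i - cvec d m C x i) * (eVec m z j - cvec d m C x j))
      = Rmat d m C x i j := by
  have h : ∀ z, C x z * ((eVec m z i - cvec d m C x i) * (eVec m z j - cvec d m C x j))
      = C x z * (eVec m z i * eVec m z j)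
        - cvec d m C x j * (C x z * eVec m z i)
        - cvec d m C x i * (C x z * eVec m z j)
        + (cvec d m C x i * cvec d m C x j) * C x z := fun z => by ring
  rw [Finset.sum_congr rfl fun z _ => h z]
  rw [Finset.sum_add_distrib, Finset.sum_sub_distrib, Finset.sum_sub_distrib,
    ← Finset.mul_sum, ← Finset.mul_sum, ← Finset.mul_sum, expec_e, expec_e, e2mom, hC1]
  unfold Rmat
  rcases eq_or_ne i j with h'|h'
  · subst h'; simp [cvec]; ring
  · simp [h']; ring

lemma cov_R (d m : ℕ) (C : Fin d → Fin (m+1) → ℝ) (x : Fin d)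
    (hC1 : ∑ z, C x z = 1) (w : Fin m → ℝ) :
    ∑ z : Fin (m+1), C x z * (∑ i, w i * (eVec m z i - cvec d m C x i))^2
      = ∑ i, ∑ j, w i * Rmat d m C x i j * w j := by
  have step1 : ∀ z : Fin (m+1), C x z * (∑ i, w i * (eVec m z i - cvec d m C x i))^2
      = ∑ i, ∑ j, (w i * w j) *
          (C x z * ((eVec m z i - cvec d m C x i) * (eVec m z j - cvec d m C x j))) := by
    intro z
    rw [sq, Finset.sum_mul_sum, Finset.mul_sum]
    refine Finset.sum_congr rfl fun i _ => ?_
    rw [Finset.mul_sum]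
    exact Finset.sum_congr rfl fun j _ => by ring
  rw [Finset.sum_congr rfl fun z _ => step1 z, Finset.sum_comm]
  refine Finset.sum_congr rfl fun i _ => ?_
  rw [Finset.sum_comm]
  refine Finset.sum_congr rfl fun j _ => ?_
  rw [← Finset.mul_sum, covij d m C x hC1 i j]
  ring

lemma sum_A_sq (d : ℕ) (A : Matrix (Fin d) (Fin d) ℝ) (x : Fin d) (hA1 : ∑ y, A x y = 1)
    (f : Fin d → ℝ) (K : ℝ) :
    ∑ y, A x y * (f y - (∑ y', A x y' * f y') + K)^2 = Gamma d A f x + K^2 := by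
  have h : ∀ y, A x y * (f y - (∑ y', A x y' * f y') + K)^2
      = A x y * (f y)^2
        - (2*(∑ y', A x y' * f y') - 2*K) * (A x y * f y)
        + (((∑ y', A x y' * f y'))^2 - 2*(∑ y', A x y' * f y')*K + K^2) * A x y :=
    fun y => by ring
  rw [Finset.sum_congr rfl fun y _ => h y, Finset.sum_add_distrib, Finset.sum_sub_distrib,
    ← Finset.mul_sum, ← Finset.mul_sum, hA1]
  unfold Gamma; ring

lemma mean_B2 (d m : ℕ) (C : Fin d → Fin (m+1) → ℝ) (x : Fin d)
    (hC1 : ∑ z, C x z = 1) (w : Fin m → ℝ) :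
    ∑ z : Fin (m+1), C x z * (∑ i, w i * (eVec m z i - cvec d m C x i)) = 0 := by
  have h : ∀ z : Fin (m+1), C x z * (∑ i, w i * (eVec m z i - cvec d m C x i))
      = ∑ i, (w i * (C x z * eVec m z i) - (w i * cvec d m C x i) * C x z) := by
    intro z
    rw [Finset.mul_sum]
    exact Finset.sum_congr rfl fun i _ => by ring
  rw [Finset.sum_congr rfl fun z _ => h z, Finset.sum_comm]
  refine Finset.sum_eq_zero fun i _ => ?_
  rw [Finset.sum_sub_distrib, ← Finset.mul_sum, ← Finset.mul_sum, expec_e, hC1]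
  ring

lemma sum_C_sq (d m : ℕ) (C : Fin d → Fin (m+1) → ℝ) (x : Fin d)
    (hC1 : ∑ z, C x z = 1) (w : Fin m → ℝ) (D : ℝ) :
    ∑ z : Fin (m+1), C x z * ((∑ i, w i * (eVec m z i - cvec d m C x i)) + D)^2
      = (∑ i, ∑ j, w i * Rmat d m C x i j * w j) + D^2 := by
  have h : ∀ z : Fin (m+1), C x z * ((∑ i, w i * (eVec m z i - cvec d m C x i)) + D)^2
      = C x z * (∑ i, w i * (eVec m z i - cvec d m C x i))^2
        + (2*D) * (C x z * (∑ i, w i * (eVec m z i - cvec d m C x i)))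
        + D^2 * C x z := fun z => by ring
  rw [Finset.sum_congr rfl fun z _ => h z, Finset.sum_add_distrib, Finset.sum_add_distrib,
    ← Finset.mul_sum, ← Finset.mul_sum, mean_B2 d m C x hC1 w, cov_R d m C x hC1 w, hC1]
  ring

end Lemmas2
noncomputable def Spath (m T : ℕ) (U : (t : ℕ) → (Fin t → Fin (m + 1)) → Fin m → ℝ)
    (β : ℝ) (zp : Fin T → Fin (m + 1)) : ℝ :=
  β - ∑ t : Fin T, ∑ i, U t.val (restrict zp t.val t.isLt.le) i * eVec m (zp t) i

lemma Spath_snoc (m T : ℕ) (U : (t : ℕ) → (Fin t → Fin (m + 1)) → Fin m → ℝ)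
    (β : ℝ) (zp : Fin T → Fin (m + 1)) (z : Fin (m+1)) :
    Spath m (T+1) U β (Fin.snoc zp z)
      = Spath m T U β zp - ∑ i, U T zp i * eVec m z i := by
  unfold Spath
  rw [Fin.sum_univ_castSucc (f := fun t : Fin (T+1) =>
    ∑ i, U t.val (restrict (Fin.snoc zp z : Fin (T+1) → Fin (m+1)) t.val t.isLt.le) i
      * eVec m ((Fin.snoc zp z : Fin (T+1) → Fin (m+1)) t) i)]
  have hcast : ∀ t : Fin T,
      (∑ i, U (t.castSucc).val
          (restrict (Fin.snoc zp z : Fin (T+1) → Fin (m+1)) (t.castSucc).val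
            (t.castSucc).isLt.le) i
        * eVec m ((Fin.snoc zp z : Fin (T+1) → Fin (m+1)) t.castSucc) i)
      = ∑ i, U t.val (restrict zp t.val t.isLt.le) i * eVec m (zp t) i := by
    intro t
    simp only [Fin.coe_castSucc, Fin.snoc_castSucc]
    rw [restrict_snoc zp z t.val t.isLt.le]
  have hlast : restrict (Fin.snoc zp z : Fin (T+1) → Fin (m+1)) (Fin.last T).val
      (Fin.last T).isLt.le = zp := by
    simp only [Fin.val_last]
    rw [restrict_snoc zp z T le_rfl, restrict_all]
  rw [Finset.sum_congr rfl fun t _ => hcast t, hlast, Fin.snoc_last]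
  simp only [Fin.val_last]
  ring

lemma sum_A_lin (d : ℕ) (A : Matrix (Fin d) (Fin d) ℝ) (x : Fin d) (hA1 : ∑ y, A x y = 1)
    (f : Fin d → ℝ) (K : ℝ) :
    ∑ y, A x y * (f y - (∑ y', A x y' * f y') + K) = K := by
  have h : ∀ y, A x y * (f y - (∑ y', A x y' * f y') + K)
      = A x y * f y - ((∑ y', A x y' * f y') - K) * A x y := fun y => by ring
  rw [Finset.sum_congr rfl fun y _ => h y, Finset.sum_sub_distrib, ← Finset.mul_sum, hA1]
  ring

lemma core_step (d m : ℕ) (A : Matrix (Fin d) (Fin d) ℝ) (C : Fin d → Fin (m+1) → ℝ)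
    (x : Fin d) (hA1 : ∑ y, A x y = 1) (hC1 : ∑ z, C x z = 1)
    (Φ : Fin (m+1) → Fin d → ℝ) (u v : Fin m → ℝ) (Yt S : ℝ)
    (hrel : ∀ z : Fin (m+1), Yt = (∑ y, A x y * Φ z y)
        + (∑ i, cvec d m C x i * (u i + v i)) - ∑ i, v i * eVec m z i) :
    (∑ z : Fin (m+1), ∑ y, (A x y * C x z) * (Φ z y - (S - ∑ i, u i * eVec m z i))^2
       = (Yt - S)^2 + (∑ z : Fin (m+1), C x z * Gamma d A (Φ z) x)
         + ∑ i, ∑ j, (u i + v i) * Rmat d m C x i j * (u j + v j))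
    ∧ (∑ z : Fin (m+1), ∑ y, (A x y * C x z) * (Φ z y - (S - ∑ i, u i * eVec m z i))
       = Yt - S) := by
  have key : ∀ (z : Fin (m+1)) (y : Fin d), Φ z y - (S - ∑ i, u i * eVec m z i)
      = Φ z y - (∑ y', A x y' * Φ z y')
        + ((∑ i, (u i + v i) * (eVec m z i - cvec d m C x i)) + (Yt - S)) := by
    intro z y
    have e1 : ∑ i, (u i + v i) * (eVec m z i - cvec d m C x i)
        = (∑ i, u i * eVec m z i) + (∑ i, v i * eVec m z i)
          - (∑ i, cvec d m C x i * (u i + v i)) := by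
      have h2 : ∀ i, (u i + v i) * (eVec m z i - cvec d m C x i)
          = u i * eVec m z i + v i * eVec m z i - cvec d m C x i * (u i + v i) :=
        fun i => by ring
      rw [Finset.sum_congr rfl fun i _ => h2 i, Finset.sum_sub_distrib,
        Finset.sum_add_distrib]
    rw [e1]
    have h := hrel z
    linarith
  constructor
  · have hAq : ∀ z : Fin (m+1),
        ∑ y, (A x y * C x z) * (Φ z y - (S - ∑ i, u i * eVec m z i))^2
        = C x z * Gamma d A (Φ z) x
          + C x z * ((∑ i, (u i + v i) * (eVec m z i - cvec d m C x i)) + (Yt - S))^2 := by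
      intro z
      have h3 : ∀ y, (A x y * C x z) * (Φ z y - (S - ∑ i, u i * eVec m z i))^2
          = C x z * (A x y * (Φ z y - (∑ y', A x y' * Φ z y')
              + ((∑ i, (u i + v i) * (eVec m z i - cvec d m C x i)) + (Yt - S)))^2) := by
        intro y; rw [key z y]; ring
      rw [Finset.sum_congr rfl fun y _ => h3 y, ← Finset.mul_sum,
        sum_A_sq d A x hA1 (Φ z)]
      ring
    rw [Finset.sum_congr rfl fun z _ => hAq z, Finset.sum_add_distrib,
      sum_C_sq d m C x hC1 (fun i => u i + v i) (Yt - S)]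
    ring
  · have hAl : ∀ z : Fin (m+1),
        ∑ y, (A x y * C x z) * (Φ z y - (S - ∑ i, u i * eVec m z i))
        = C x z * ((∑ i, (u i + v i) * (eVec m z i - cvec d m C x i)) + (Yt - S)) := by
      intro z
      have h3 : ∀ y, (A x y * C x z) * (Φ z y - (S - ∑ i, u i * eVec m z i))
          = C x z * (A x y * (Φ z y - (∑ y', A x y' * Φ z y')
              + ((∑ i, (u i + v i) * (eVec m z i - cvec d m C x i)) + (Yt - S)))) := by
        intro y; rw [key z y]; ring
      rw [Finset.sum_congr rfl fun y _ => h3 y, ← Finset.mul_sum,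
        sum_A_lin d A x hA1 (Φ z)]
    rw [Finset.sum_congr rfl fun z _ => hAl z]
    have h4 : ∀ z : Fin (m+1),
        C x z * ((∑ i, (u i + v i) * (eVec m z i - cvec d m C x i)) + (Yt - S))
        = C x z * (∑ i, (u i + v i) * (eVec m z i - cvec d m C x i)) + (Yt - S) * C x z :=
      fun z => by ring
    rw [Finset.sum_congr rfl fun z _ => h4 z, Finset.sum_add_distrib,
      mean_B2 d m C x hC1 (fun i => u i + v i), ← Finset.mul_sum, hC1]
    ring
lemma ell_sum_snoc (d m T : ℕ) (A : Matrix (Fin d) (Fin d) ℝ) (C : Fin d → Fin (m+1) → ℝ)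
    (U : (t : ℕ) → (Fin t → Fin (m + 1)) → Fin m → ℝ)
    (Y : (t : ℕ) → (Fin t → Fin (m + 1)) → Fin d → ℝ)
    (V : (t : ℕ) → (Fin t → Fin (m + 1)) → Fin d → Fin m → ℝ)
    (xp : Fin (T+1) → Fin d) (zp : Fin T → Fin (m+1)) (y : Fin d) (z : Fin (m+1)) :
    (∑ t : Fin (T+1),
        ell d m A C (Y (t.val + 1) (restrict (Fin.snoc zp z) (t.val + 1) t.isLt))
          (V t.val (restrict (Fin.snoc zp z) t.val t.isLt.le))
          (U t.val (restrict (Fin.snoc zp z) t.val t.isLt.le))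
          ((Fin.snoc xp y : Fin (T+2) → Fin d) t.castSucc))
    = (∑ t : Fin T,
        ell d m A C (Y (t.val + 1) (restrict zp (t.val + 1) t.isLt))
          (V t.val (restrict zp t.val t.isLt.le))
          (U t.val (restrict zp t.val t.isLt.le)) (xp t.castSucc))
      + ell d m A C (Y (T+1) (Fin.snoc zp z)) (V T zp) (U T zp) (xp (Fin.last T)) := by
  rw [Fin.sum_univ_castSucc]
  congr 1
  · refine Finset.sum_congr rfl fun t _ => ?_
    simp only [Fin.coe_castSucc, Fin.snoc_castSucc]
    rw [restrict_snoc zp z (t.val+1) t.isLt, restrict_snoc zp z t.val t.isLt.le]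
  · simp only [Fin.val_last, Fin.snoc_castSucc]
    rw [restrict_all, restrict_snoc zp z T le_rfl, restrict_all]

lemma Jcost_succ (d m T : ℕ) (μ0 : Fin d → ℝ) (A : Matrix (Fin d) (Fin d) ℝ)
    (C : Fin d → Fin (m+1) → ℝ)
    (hA1 : ∀ x, ∑ y, A x y = 1) (hC1 : ∀ x, ∑ z, C x z = 1)
    (U : (t : ℕ) → (Fin t → Fin (m + 1)) → Fin m → ℝ)
    (Y : (t : ℕ) → (Fin t → Fin (m + 1)) → Fin d → ℝ)
    (V : (t : ℕ) → (Fin t → Fin (m + 1)) → Fin d → Fin m → ℝ) :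
    Jcost d m (T+1) μ0 A C U Y V = Jcost d m T μ0 A C U Y V
      + ∑ xp : Fin (T+1) → Fin d, ∑ zp : Fin T → Fin (m+1),
          hmmJoint d m T μ0 A C xp zp *
            ((∑ z : Fin (m+1), C (xp (Fin.last T)) z *
                Gamma d A (Y (T+1) (Fin.snoc zp z)) (xp (Fin.last T)))
              + ∑ i, ∑ j, (U T zp i + V T zp (xp (Fin.last T)) i)
                  * Rmat d m C (xp (Fin.last T)) i j
                  * (U T zp j + V T zp (xp (Fin.last T)) j)) := by
  unfold Jcost
  conv_rhs => rw [add_assoc]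
  congr 1
  rw [sum_snoc]
  rw [← Finset.sum_add_distrib]
  refine Finset.sum_congr rfl fun xp _ => ?_
  have hy : ∀ y : Fin d,
      (∑ ZP : Fin (T+1) → Fin (m+1), hmmJoint d m (T+1) μ0 A C (Fin.snoc xp y) ZP *
        ∑ t : Fin (T+1),
          ell d m A C (Y (t.val + 1) (restrict ZP (t.val + 1) t.isLt))
            (V t.val (restrict ZP t.val t.isLt.le))
            (U t.val (restrict ZP t.val t.isLt.le))
            ((Fin.snoc xp y : Fin (T+2) → Fin d) t.castSucc))
      = ∑ zp : Fin T → Fin (m+1), ∑ z : Fin (m+1),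
          (hmmJoint d m T μ0 A C xp zp * (A (xp (Fin.last T)) y * C (xp (Fin.last T)) z)) *
            ((∑ t : Fin T,
              ell d m A C (Y (t.val + 1) (restrict zp (t.val + 1) t.isLt))
                (V t.val (restrict zp t.val t.isLt.le))
                (U t.val (restrict zp t.val t.isLt.le)) (xp t.castSucc))
              + ell d m A C (Y (T+1) (Fin.snoc zp z)) (V T zp) (U T zp) (xp (Fin.last T))) := by
    intro y
    rw [sum_snoc]
    refine Finset.sum_congr rfl fun zp _ => Finset.sum_congr rfl fun z _ => ?_
    rw [hmmJoint_snoc, ell_sum_snoc d m T A C U Y V xp zp y z]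
  rw [Finset.sum_congr rfl fun y _ => hy y]
  trans (∑ zp : Fin T → Fin (m+1), ∑ y : Fin d, (∑ z : Fin (m+1),
      (hmmJoint d m T μ0 A C xp zp * (A (xp (Fin.last T)) y * C (xp (Fin.last T)) z)) *
        ((∑ t : Fin T,
          ell d m A C (Y (t.val + 1) (_root_.restrict zp (t.val + 1) t.isLt))
            (V t.val (_root_.restrict zp t.val t.isLt.le))
            (U t.val (_root_.restrict zp t.val t.isLt.le)) (xp t.castSucc))
          + ell d m A C (Y (T+1) (Fin.snoc zp z)) (V T zp) (U T zp) (xp (Fin.last T))) : ℝ))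
  · exact Finset.sum_comm
  rw [← Finset.sum_add_distrib]
  refine Finset.sum_congr rfl fun zp _ => ?_
  set x := xp (Fin.last T) with hx
  set J := hmmJoint d m T μ0 A C xp zp with hJ
  set P1 := ∑ t : Fin T,
        ell d m A C (Y (t.val + 1) (restrict zp (t.val + 1) t.isLt))
          (V t.val (restrict zp t.val t.isLt.le))
          (U t.val (restrict zp t.val t.isLt.le)) (xp t.castSucc) with hP1
  have h1 : ∀ y : Fin d,
      (∑ z : Fin (m+1), (J * (A x y * C x z)) *
        (P1 + ell d m A C (Y (T+1) (Fin.snoc zp z)) (V T zp) (U T zp) x))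
      = A x y * (J * (P1 + ∑ z : Fin (m+1), C x z *
          ell d m A C (Y (T+1) (Fin.snoc zp z)) (V T zp) (U T zp) x)) := by
    intro y
    have h2 : ∀ z : Fin (m+1), (J * (A x y * C x z)) *
        (P1 + ell d m A C (Y (T+1) (Fin.snoc zp z)) (V T zp) (U T zp) x)
        = (J * A x y) * (C x z * P1
            + C x z * ell d m A C (Y (T+1) (Fin.snoc zp z)) (V T zp) (U T zp) x) :=
      fun z => by ring
    rw [Finset.sum_congr rfl fun z _ => h2 z, ← Finset.mul_sum, Finset.sum_add_distrib,
      ← Finset.sum_mul, hC1 x]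
    ring
  rw [Finset.sum_congr rfl fun y _ => h1 y, ← Finset.sum_mul, hA1 x]
  have h3 : ∀ z : Fin (m+1), C x z *
      ell d m A C (Y (T+1) (Fin.snoc zp z)) (V T zp) (U T zp) x
      = C x z * Gamma d A (Y (T+1) (Fin.snoc zp z)) x
        + C x z * ∑ i, ∑ j, (U T zp i + V T zp x i) * Rmat d m C x i j
            * (U T zp j + V T zp x j) := by
    intro z; unfold ell; ring
  rw [Finset.sum_congr rfl fun z _ => h3 z, Finset.sum_add_distrib, ← Finset.sum_mul,
    hC1 x]
  ring
lemma bigsum_snoc (d m T : ℕ) (μ0 : Fin d → ℝ) (A : Matrix (Fin d) (Fin d) ℝ)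
    (C : Fin d → Fin (m+1) → ℝ) (G : (Fin (T+1) → Fin (m+1)) → Fin d → ℝ) :
    (∑ XP : Fin (T+2) → Fin d, ∑ ZP : Fin (T+1) → Fin (m+1),
      hmmJoint d m (T+1) μ0 A C XP ZP * G ZP (XP (Fin.last (T+1))))
    = ∑ xp : Fin (T+1) → Fin d, ∑ zp : Fin T → Fin (m+1),
        hmmJoint d m T μ0 A C xp zp *
          ∑ z : Fin (m+1), ∑ y : Fin d,
            (A (xp (Fin.last T)) y * C (xp (Fin.last T)) z) * G (Fin.snoc zp z) y := by
  rw [sum_snoc]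
  refine Finset.sum_congr rfl fun xp _ => ?_
  have hy : ∀ y : Fin d,
      (∑ ZP : Fin (T+1) → Fin (m+1), hmmJoint d m (T+1) μ0 A C (Fin.snoc xp y) ZP *
        G ZP ((Fin.snoc xp y : Fin (T+2) → Fin d) (Fin.last (T+1))))
      = ∑ zp : Fin T → Fin (m+1), ∑ z : Fin (m+1),
          hmmJoint d m T μ0 A C xp zp *
            ((A (xp (Fin.last T)) y * C (xp (Fin.last T)) z) * G (Fin.snoc zp z) y) := by
    intro y
    rw [sum_snoc]
    refine Finset.sum_congr rfl fun zp _ => Finset.sum_congr rfl fun z _ => ?_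
    rw [hmmJoint_snoc, Fin.snoc_last]
    ring
  rw [Finset.sum_congr rfl fun y _ => hy y]
  trans (∑ zp : Fin T → Fin (m+1), ∑ y : Fin d, (∑ z : Fin (m+1),
      hmmJoint d m T μ0 A C xp zp *
        ((A (xp (Fin.last T)) y * C (xp (Fin.last T)) z) * G (Fin.snoc zp z) y) : ℝ))
  · exact Finset.sum_comm
  refine Finset.sum_congr rfl fun zp _ => ?_
  rw [Finset.mul_sum]
  trans (∑ z : Fin (m+1), ∑ y : Fin d,
      hmmJoint d m T μ0 A C xp zp *
        ((A (xp (Fin.last T)) y * C (xp (Fin.last T)) z) * G (Fin.snoc zp z) y))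
  · exact Finset.sum_comm
  refine Finset.sum_congr rfl fun z _ => ?_
  rw [Finset.mul_sum]

lemma duality_main (d m : ℕ) (μ0 : Fin d → ℝ) (A : Matrix (Fin d) (Fin d) ℝ)
    (C : Fin d → Fin (m + 1) → ℝ)
    (hμ1 : ∑ x, μ0 x = 1) (hA1 : ∀ x, ∑ y, A x y = 1) (hC1 : ∀ x, ∑ z, C x z = 1) :
    ∀ (T : ℕ) (F : (Fin T → Fin (m + 1)) → Fin d → ℝ)
      (U : (t : ℕ) → (Fin t → Fin (m + 1)) → Fin m → ℝ)
      (Y : (t : ℕ) → (Fin t → Fin (m + 1)) → Fin d → ℝ)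
      (V : (t : ℕ) → (Fin t → Fin (m + 1)) → Fin d → Fin m → ℝ),
      SolvesBSDE d m T A C U Y V F →
      ((∑ xp : Fin (T+1) → Fin d, ∑ zp : Fin T → Fin (m+1),
          hmmJoint d m T μ0 A C xp zp *
            (F zp (xp (Fin.last T))
              - Spath m T U (∑ x, μ0 x * Y 0 (fun i => i.elim0) x) zp)) = 0)
      ∧ Jcost d m T μ0 A C U Y V
        = ∑ xp : Fin (T+1) → Fin d, ∑ zp : Fin T → Fin (m+1),
            hmmJoint d m T μ0 A C xp zp *
              (F zp (xp (Fin.last T))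
                - Spath m T U (∑ x, μ0 x * Y 0 (fun i => i.elim0) x) zp)^2 := by
  intro T
  induction T with
  | zero =>
    intro F U Y V hsol
    have hF := hsol.1
    subst hF
    have hzsum : ∀ (G : (Fin 0 → Fin (m+1)) → ℝ),
        (∑ zp : Fin 0 → Fin (m+1), G zp) = G (fun i => i.elim0) := by
      intro G
      rw [Fintype.sum_unique]
      exact congrArg G (Subsingleton.elim _ _)
    have hxsum : ∀ (H : (Fin 1 → Fin d) → ℝ),
        (∑ xp : Fin 1 → Fin d, H xp) = ∑ x : Fin d, H (fun _ => x) := by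
      intro H
      exact (Fintype.sum_equiv (Equiv.funUnique (Fin 1) (Fin d)).symm
        (fun x => H (fun _ => x)) H (fun x => rfl)).symm
    have hJ0 : ∀ (x : Fin d) (zp : Fin 0 → Fin (m+1)),
        hmmJoint d m 0 μ0 A C (fun _ => x) zp = μ0 x := by
      intro x zp; unfold hmmJoint; simp
    have hS0 : ∀ zp : Fin 0 → Fin (m+1),
        Spath m 0 U (∑ x, μ0 x * Y 0 (fun i => i.elim0) x) zp
          = ∑ x, μ0 x * Y 0 (fun i => i.elim0) x := by
      intro zp; unfold Spath; simp
    constructor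
    · rw [hxsum]
      have hterm : ∀ x : Fin d,
          (∑ zp : Fin 0 → Fin (m+1), hmmJoint d m 0 μ0 A C (fun _ => x) zp *
            (Y 0 zp ((fun _ : Fin 1 => x) (Fin.last 0))
              - Spath m 0 U (∑ x', μ0 x' * Y 0 (fun i => i.elim0) x') zp))
          = μ0 x * (Y 0 (fun i => i.elim0) x
              - ∑ x', μ0 x' * Y 0 (fun i => i.elim0) x') := by
        intro x
        rw [hzsum, hJ0, hS0]
      rw [Finset.sum_congr rfl fun x _ => hterm x]
      have hexp : ∀ x : Fin d, μ0 x * (Y 0 (fun i => i.elim0) x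
            - ∑ x', μ0 x' * Y 0 (fun i => i.elim0) x')
          = μ0 x * Y 0 (fun i => i.elim0) x
            - (∑ x', μ0 x' * Y 0 (fun i => i.elim0) x') * μ0 x := fun x => by ring
      rw [Finset.sum_congr rfl fun x _ => hexp x, Finset.sum_sub_distrib,
        ← Finset.mul_sum, hμ1]
      ring
    · unfold Jcost
      have h0 : (∑ xp : Fin 1 → Fin d, ∑ zp : Fin 0 → Fin (m+1),
          hmmJoint d m 0 μ0 A C xp zp *
            ∑ t : Fin 0,
              ell d m A C (Y (t.val + 1) (restrict zp (t.val + 1) t.isLt))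
                (V t.val (restrict zp t.val t.isLt.le))
                (U t.val (restrict zp t.val t.isLt.le)) (xp t.castSucc)) = 0 := by
        simp
      rw [h0, add_zero, hxsum]
      have hterm : ∀ x : Fin d,
          (∑ zp : Fin 0 → Fin (m+1), hmmJoint d m 0 μ0 A C (fun _ => x) zp *
            (Y 0 zp ((fun _ : Fin 1 => x) (Fin.last 0))
              - Spath m 0 U (∑ x', μ0 x' * Y 0 (fun i => i.elim0) x') zp)^2)
          = μ0 x * (Y 0 (fun i => i.elim0) x
              - ∑ x', μ0 x' * Y 0 (fun i => i.elim0) x')^2 := by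
        intro x
        rw [hzsum, hJ0, hS0]
      rw [Finset.sum_congr rfl fun x _ => hterm x]
      have hexp : ∀ x : Fin d, μ0 x * (Y 0 (fun i => i.elim0) x
            - ∑ x', μ0 x' * Y 0 (fun i => i.elim0) x')^2
          = μ0 x * (Y 0 (fun i => i.elim0) x)^2
            - (2 * (∑ x', μ0 x' * Y 0 (fun i => i.elim0) x'))
                * (μ0 x * Y 0 (fun i => i.elim0) x)
            + (∑ x', μ0 x' * Y 0 (fun i => i.elim0) x')^2 * μ0 x := fun x => by ring
      rw [Finset.sum_congr rfl fun x _ => hexp x, Finset.sum_add_distrib,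
        Finset.sum_sub_distrib, ← Finset.mul_sum, ← Finset.mul_sum, hμ1]
      ring
  | succ T IH =>
    intro F U Y V hsol
    obtain ⟨hterm, hstep⟩ := hsol
    have hsol' : SolvesBSDE d m T A C U Y V (Y T) := by
      refine ⟨rfl, fun zp t x => ?_⟩
      have h := hstep (Fin.snoc zp 0) t.castSucc x
      simp only [Fin.coe_castSucc, Fin.snoc_castSucc] at h
      rw [restrict_snoc zp 0 t.val t.isLt.le, restrict_snoc zp 0 (t.val+1) t.isLt] at h
      exact h
    obtain ⟨IH1, IH2⟩ := IH (Y T) U Y V hsol'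
    set β := ∑ x, μ0 x * Y 0 (fun i => i.elim0) x with hβ
    have hrel : ∀ (zp : Fin T → Fin (m+1)) (x : Fin d) (z : Fin (m+1)),
        Y T zp x = (∑ y, A x y * F (Fin.snoc zp z) y)
          + (∑ i, cvec d m C x i * (U T zp i + V T zp x i))
          - ∑ i, V T zp x i * eVec m z i := by
      intro zp x z
      have h := hstep (Fin.snoc zp z) (Fin.last T) x
      simp only [Fin.val_last, Fin.snoc_last] at h
      rw [restrict_all (Fin.snoc zp z)] at h
      rw [restrict_snoc zp z T le_rfl, restrict_all zp] at h
      rw [hterm] at h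
      exact h
    constructor
    · rw [bigsum_snoc d m T μ0 A C (fun ZP y => F ZP y - Spath m (T+1) U β ZP)]
      refine Eq.trans (Finset.sum_congr rfl fun xp _ =>
        Finset.sum_congr rfl fun zp _ => ?_) IH1
      congr 1
      simp only [Spath_snoc]
      exact (core_step d m A C (xp (Fin.last T)) (hA1 _) (hC1 _)
        (fun z y => F (Fin.snoc zp z) y) (U T zp) (V T zp (xp (Fin.last T)))
        (Y T zp (xp (Fin.last T))) (Spath m T U β zp)
        (fun z => hrel zp (xp (Fin.last T)) z)).2
    · rw [Jcost_succ d m T μ0 A C hA1 hC1 U Y V, IH2]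
      rw [bigsum_snoc d m T μ0 A C (fun ZP y => (F ZP y - Spath m (T+1) U β ZP)^2)]
      rw [← Finset.sum_add_distrib]
      refine Finset.sum_congr rfl fun xp _ => ?_
      rw [← Finset.sum_add_distrib]
      refine Finset.sum_congr rfl fun zp _ => ?_
      rw [← mul_add]
      congr 1
      have hc := (core_step d m A C (xp (Fin.last T)) (hA1 _) (hC1 _)
        (fun z y => F (Fin.snoc zp z) y) (U T zp) (V T zp (xp (Fin.last T)))
        (Y T zp (xp (Fin.last T))) (Spath m T U β zp)
        (fun z => hrel zp (xp (Fin.last T)) z)).1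
      simp only [Spath_snoc]
      rw [hc, hterm]
      ring
lemma sum_fn0 (m : ℕ) (G : (Fin 0 → Fin (m+1)) → ℝ) :
    (∑ zp : Fin 0 → Fin (m+1), G zp) = G (fun i => i.elim0) := by
  rw [Fintype.sum_unique]
  exact congrArg G (Subsingleton.elim _ _)

lemma sum_fn1 (d : ℕ) (H : (Fin 1 → Fin d) → ℝ) :
    (∑ xp : Fin 1 → Fin d, H xp) = ∑ x : Fin d, H (fun _ => x) :=
  (Fintype.sum_equiv (Equiv.funUnique (Fin 1) (Fin d)).symm
    (fun x => H (fun _ => x)) H (fun x => rfl)).symm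

lemma total_mass (d m : ℕ) (μ0 : Fin d → ℝ) (A : Matrix (Fin d) (Fin d) ℝ)
    (C : Fin d → Fin (m+1) → ℝ)
    (hμ1 : ∑ x, μ0 x = 1) (hA1 : ∀ x, ∑ y, A x y = 1) (hC1 : ∀ x, ∑ z, C x z = 1) :
    ∀ T, (∑ xp : Fin (T+1) → Fin d, ∑ zp : Fin T → Fin (m+1),
      hmmJoint d m T μ0 A C xp zp) = 1 := by
  intro T
  induction T with
  | zero =>
    rw [sum_fn1]
    have h : ∀ x : Fin d, (∑ zp : Fin 0 → Fin (m+1),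
        hmmJoint d m 0 μ0 A C (fun _ => x) zp) = μ0 x := by
      intro x
      rw [sum_fn0]
      unfold hmmJoint; simp
    rw [Finset.sum_congr rfl fun x _ => h x, hμ1]
  | succ T IH =>
    have h := bigsum_snoc d m T μ0 A C (fun _ _ => 1)
    simp only [mul_one] at h
    rw [h]
    have h2 : ∀ (xp : Fin (T+1) → Fin d) (zp : Fin T → Fin (m+1)),
        hmmJoint d m T μ0 A C xp zp *
          (∑ z : Fin (m+1), ∑ y : Fin d, A (xp (Fin.last T)) y * C (xp (Fin.last T)) z)
        = hmmJoint d m T μ0 A C xp zp := by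
      intro xp zp
      have h3 : ∀ z : Fin (m+1), (∑ y : Fin d, A (xp (Fin.last T)) y * C (xp (Fin.last T)) z)
          = C (xp (Fin.last T)) z := by
        intro z
        rw [← Finset.sum_mul, hA1, one_mul]
      rw [Finset.sum_congr rfl fun z _ => h3 z, hC1, mul_one]
    rw [Finset.sum_congr rfl fun xp _ => Finset.sum_congr rfl fun zp _ => h2 xp zp, IH]

lemma hmmJoint_nonneg (d m T : ℕ) (μ0 : Fin d → ℝ) (A : Matrix (Fin d) (Fin d) ℝ)
    (C : Fin d → Fin (m+1) → ℝ)
    (hμ0 : ∀ x, 0 ≤ μ0 x) (hA0 : ∀ x y, 0 ≤ A x y) (hC0 : ∀ x z, 0 ≤ C x z)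
    (xp : Fin (T+1) → Fin d) (zp : Fin T → Fin (m+1)) :
    0 ≤ hmmJoint d m T μ0 A C xp zp := by
  unfold hmmJoint
  exact mul_nonneg (mul_nonneg (hμ0 _) (Finset.prod_nonneg fun t _ => hA0 _ _))
    (Finset.prod_nonneg fun t _ => hC0 _ _)

lemma num_eq (d m T : ℕ) (μ0 : Fin d → ℝ) (A : Matrix (Fin d) (Fin d) ℝ)
    (C : Fin d → Fin (m+1) → ℝ)
    (hμ0 : ∀ x, 0 ≤ μ0 x) (hA0 : ∀ x y, 0 ≤ A x y) (hC0 : ∀ x z, 0 ≤ C x z)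
    (F : (Fin T → Fin (m+1)) → Fin d → ℝ) (zp : Fin T → Fin (m+1)) :
    (∑ xp : Fin (T+1) → Fin d, hmmJoint d m T μ0 A C xp zp * F zp (xp (Fin.last T)))
      = PZ d m T μ0 A C zp * piT d m T μ0 A C F zp := by
  unfold piT
  rcases eq_or_ne (PZ d m T μ0 A C zp) 0 with h|h
  · rw [h, zero_mul]
    have hall := (Finset.sum_eq_zero_iff_of_nonneg
      (fun xp _ => hmmJoint_nonneg d m T μ0 A C hμ0 hA0 hC0 xp zp)).1 h
    exact Finset.sum_eq_zero fun xp _ => by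
      rw [hall xp (Finset.mem_univ xp), zero_mul]
  · rw [mul_comm, div_mul_cancel₀ _ h]

lemma orth (d m T : ℕ) (μ0 : Fin d → ℝ) (A : Matrix (Fin d) (Fin d) ℝ)
    (C : Fin d → Fin (m+1) → ℝ)
    (hμ0 : ∀ x, 0 ≤ μ0 x) (hA0 : ∀ x y, 0 ≤ A x y) (hC0 : ∀ x z, 0 ≤ C x z)
    (F : (Fin T → Fin (m+1)) → Fin d → ℝ) (G : (Fin T → Fin (m+1)) → ℝ) :
    (∑ xp : Fin (T+1) → Fin d, ∑ zp : Fin T → Fin (m+1),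
      hmmJoint d m T μ0 A C xp zp *
        ((F zp (xp (Fin.last T)) - piT d m T μ0 A C F zp) * G zp)) = 0 := by
  refine Eq.trans Finset.sum_comm ?_
  refine Finset.sum_eq_zero fun zp _ => ?_
  have h : ∀ xp : Fin (T+1) → Fin d,
      hmmJoint d m T μ0 A C xp zp *
        ((F zp (xp (Fin.last T)) - piT d m T μ0 A C F zp) * G zp)
      = G zp * (hmmJoint d m T μ0 A C xp zp * F zp (xp (Fin.last T)))
        - (G zp * piT d m T μ0 A C F zp) * hmmJoint d m T μ0 A C xp zp :=
    fun xp => by ring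
  rw [Finset.sum_congr rfl fun xp _ => h xp, Finset.sum_sub_distrib,
    ← Finset.mul_sum, ← Finset.mul_sum,
    num_eq d m T μ0 A C hμ0 hA0 hC0 F zp]
  have hPZ : (∑ xp : Fin (T+1) → Fin d, hmmJoint d m T μ0 A C xp zp)
      = PZ d m T μ0 A C zp := rfl
  rw [hPZ]
  ring
lemma repr_exists (m : ℕ) : ∀ (T : ℕ) (S : (Fin T → Fin (m+1)) → ℝ),
    ∃ (β : ℝ) (U : (t : ℕ) → (Fin t → Fin (m+1)) → Fin m → ℝ),
      ∀ zp : Fin T → Fin (m+1), S zp = Spath m T U β zp := by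
  intro T
  induction T with
  | zero =>
    intro S
    refine ⟨S (fun i => i.elim0), fun _ _ _ => 0, fun zp => ?_⟩
    unfold Spath
    simp only [Finset.univ_eq_empty, Finset.sum_empty, sub_zero]
    exact congrArg S (Subsingleton.elim _ _)
  | succ T IH =>
    intro S
    set S' : (Fin T → Fin (m+1)) → ℝ :=
      fun zp => (∑ z : Fin (m+1), S (Fin.snoc zp z)) / (m+1) with hS'
    obtain ⟨β, U', hU'⟩ := IH S'
    set UL : (Fin T → Fin (m+1)) → Fin m → ℝ :=
      fun zp i => S' zp - S (Fin.snoc zp (Fin.succ i)) with hUL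
    set Ufull : (t : ℕ) → (Fin t → Fin (m+1)) → Fin m → ℝ :=
      fun t => if h : t = T then (fun z i => UL (fun s => z (Fin.cast h.symm s)) i)
        else U' t with hUf
    have hUfT : ∀ z : Fin T → Fin (m+1), Ufull T z = UL z := by
      intro z
      have h : Ufull T = fun (z : Fin T → Fin (m+1)) i =>
          UL (fun s => z (Fin.cast (rfl : T = T).symm s)) i := dif_pos rfl
      rw [h]
      rfl
    have hUflt : ∀ (t : ℕ), t ≠ T → Ufull t = U' t := by
      intro t ht
      exact dif_neg ht
    have hsum : ∀ zp : Fin T → Fin (m+1),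
        ((m:ℝ)+1) * S' zp = ∑ z : Fin (m+1), S (Fin.snoc zp z) := by
      intro zp
      rw [hS']
      field_simp
    have claim : ∀ (zp : Fin T → Fin (m+1)) (z' : Fin (m+1)),
        S (Fin.snoc zp z') = S' zp - ∑ i, UL zp i * eVec m z' i := by
      intro zp z'
      refine Fin.cases ?_ ?_ z'
      · have h1 : ∑ z'' : Fin (m+1), S (Fin.snoc zp z'')
            = S (Fin.snoc zp 0) + ∑ i : Fin m, S (Fin.snoc zp (Fin.succ i)) :=
          Fin.sum_univ_succ _
        have h2 : ∑ i : Fin m, UL zp i * eVec m 0 i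
            = (∑ i : Fin m, S (Fin.snoc zp (Fin.succ i))) - (m : ℝ) * S' zp := by
          have h3 : ∀ i : Fin m, UL zp i * eVec m 0 i
              = S (Fin.snoc zp (Fin.succ i)) - S' zp := by
            intro i
            rw [hUL, eVec_zero]
            ring
          rw [Finset.sum_congr rfl fun i _ => h3 i, Finset.sum_sub_distrib,
            Finset.sum_const, Finset.card_univ, Fintype.card_fin, nsmul_eq_mul]
        rw [h2]
        have := hsum zp
        linarith
      · intro k
        have h2 : ∑ i : Fin m, UL zp i * eVec m (Fin.succ k) i = UL zp k := by
          have h3 : ∀ i : Fin m, UL zp i * eVec m (Fin.succ k) i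
              = if i = k then UL zp i else 0 := by
            intro i
            rw [eVec_succ]
            rcases eq_or_ne k i with h|h
            · subst h; simp
            · simp [h, h.symm]
          rw [Finset.sum_congr rfl fun i _ => h3 i, Finset.sum_ite_eq' Finset.univ k]
          simp
        rw [h2, hUL]
        ring
    refine ⟨β, Ufull, fun zp => ?_⟩
    have hzp : zp = Fin.snoc (_root_.restrict zp T (Nat.le_succ T)) (zp (Fin.last T)) :=
      (Fin.snoc_init_self zp).symm
    conv_lhs => rw [hzp]
    rw [claim (_root_.restrict zp T (Nat.le_succ T)) (zp (Fin.last T)),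
      hU' (_root_.restrict zp T (Nat.le_succ T))]
    unfold Spath
    rw [Fin.sum_univ_castSucc (f := fun t : Fin (T+1) =>
      ∑ i, Ufull t.val (_root_.restrict zp t.val t.isLt.le) i * eVec m (zp t) i)]
    have hcast : ∀ t : Fin T,
        (∑ i, Ufull (t.castSucc).val (_root_.restrict zp (t.castSucc).val (t.castSucc).isLt.le) i
          * eVec m (zp t.castSucc) i)
        = ∑ i, U' t.val (_root_.restrict (_root_.restrict zp T (Nat.le_succ T)) t.val t.isLt.le) i
            * eVec m ((_root_.restrict zp T (Nat.le_succ T)) t) i := by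
      intro t
      simp only [Fin.coe_castSucc]
      rw [hUflt t.val (Nat.ne_of_lt t.isLt)]
      rfl
    have hlast :
        (∑ i, Ufull (Fin.last T).val (_root_.restrict zp (Fin.last T).val (Fin.last T).isLt.le) i
          * eVec m (zp (Fin.last T)) i)
        = ∑ i, UL (_root_.restrict zp T (Nat.le_succ T)) i * eVec m (zp (Fin.last T)) i := by
      simp only [Fin.val_last]
      rw [hUfT]
    rw [Finset.sum_congr rfl fun t _ => hcast t, hlast]
    ring
lemma bsde_exists (d m : ℕ) (A : Matrix (Fin d) (Fin d) ℝ) (C : Fin d → Fin (m+1) → ℝ) :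
    ∀ (T : ℕ) (F : (Fin T → Fin (m+1)) → Fin d → ℝ)
      (U : (t : ℕ) → (Fin t → Fin (m+1)) → Fin m → ℝ),
      ∃ Y V, SolvesBSDE d m T A C U Y V F := by
  intro T
  induction T with
  | zero =>
    intro F U
    refine ⟨fun t z x => if t = 0 then F (fun i => i.elim0) x else 0,
      fun _ _ _ _ => 0, ?_, ?_⟩
    · funext z x
      simp only [if_pos rfl]
      exact congrFun (congrArg F (Subsingleton.elim _ _)) x
    · intro zp t x
      exact absurd t.isLt (Nat.not_lt_zero _)
  | succ T IH =>
    intro F U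
    set φ : (Fin T → Fin (m+1)) → Fin d → Fin (m+1) → ℝ :=
      fun zp x z => ∑ y, A x y * F (Fin.snoc zp z) y with hφ
    set a : (Fin T → Fin (m+1)) → Fin d → ℝ :=
      fun zp x => (∑ z : Fin (m+1), φ zp x z) / (m+1) with ha
    set VL : (Fin T → Fin (m+1)) → Fin d → Fin m → ℝ :=
      fun zp x i => φ zp x (Fin.succ i) - a zp x with hVL
    set G : (Fin T → Fin (m+1)) → Fin d → ℝ :=
      fun zp x => a zp x + ∑ i, cvec d m C x i * (U T zp i + VL zp x i) with hG
    obtain ⟨Y', V', hY'F, hY'step⟩ := IH G U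
    set Ybig : (t : ℕ) → (Fin t → Fin (m+1)) → Fin d → ℝ :=
      fun t => if h : t = T+1 then (fun z x => F (fun s => z (Fin.cast h.symm s)) x)
        else Y' t with hYb
    set Vbig : (t : ℕ) → (Fin t → Fin (m+1)) → Fin d → Fin m → ℝ :=
      fun t => if h : t = T then (fun z x i => VL (fun s => z (Fin.cast h.symm s)) x i)
        else V' t with hVb
    have hYlt : ∀ s : ℕ, s ≠ T+1 → Ybig s = Y' s := fun s hs => dif_neg hs
    have hYT1 : Ybig (T+1) = F := by
      have h : Ybig (T+1) = fun (z : Fin (T+1) → Fin (m+1)) x =>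
          F (fun s => z (Fin.cast (rfl : T+1 = T+1).symm s)) x := dif_pos rfl
      rw [h]
      rfl
    have hVlt : ∀ s : ℕ, s ≠ T → Vbig s = V' s := fun s hs => dif_neg hs
    have hVT : Vbig T = VL := by
      have h : Vbig T = fun (z : Fin T → Fin (m+1)) x i =>
          VL (fun s => z (Fin.cast (rfl : T = T).symm s)) x i := dif_pos rfl
      rw [h]
      rfl
    have hsum : ∀ (zp : Fin T → Fin (m+1)) (x : Fin d),
        ((m:ℝ)+1) * a zp x = ∑ z : Fin (m+1), φ zp x z := by
      intro zp x
      rw [ha]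
      field_simp
    have hphi : ∀ (zp : Fin T → Fin (m+1)) (x : Fin d) (z : Fin (m+1)),
        φ zp x z = a zp x + ∑ i, VL zp x i * eVec m z i := by
      intro zp x z
      refine Fin.cases ?_ ?_ z
      · have h1 : ∑ z'' : Fin (m+1), φ zp x z''
            = φ zp x 0 + ∑ i : Fin m, φ zp x (Fin.succ i) := Fin.sum_univ_succ _
        have h2 : ∑ i : Fin m, VL zp x i * eVec m 0 i
            = (m : ℝ) * a zp x - ∑ i : Fin m, φ zp x (Fin.succ i) := by
          have h3 : ∀ i : Fin m, VL zp x i * eVec m 0 i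
              = a zp x - φ zp x (Fin.succ i) := by
            intro i
            rw [hVL, eVec_zero]
            ring
          rw [Finset.sum_congr rfl fun i _ => h3 i, Finset.sum_sub_distrib,
            Finset.sum_const, Finset.card_univ, Fintype.card_fin, nsmul_eq_mul]
        rw [h2]
        have := hsum zp x
        linarith
      · intro k
        have h2 : ∑ i : Fin m, VL zp x i * eVec m (Fin.succ k) i = VL zp x k := by
          have h3 : ∀ i : Fin m, VL zp x i * eVec m (Fin.succ k) i
              = if i = k then VL zp x i else 0 := by
            intro i
            rw [eVec_succ]
            rcases eq_or_ne k i with h|h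
            · subst h; simp
            · simp [h, h.symm]
          rw [Finset.sum_congr rfl fun i _ => h3 i, Finset.sum_ite_eq' Finset.univ k]
          simp
        rw [h2, hVL]
        ring
    refine ⟨Ybig, Vbig, hYT1, ?_⟩
    intro zp t x
    rcases Fin.eq_castSucc_or_eq_last t with ⟨j, rfl⟩ | rfl
    · simp only [Fin.coe_castSucc]
      rw [hYlt j.val (Nat.ne_of_lt (Nat.lt_succ_of_lt j.isLt)),
        hYlt (j.val+1) (Nat.ne_of_lt (Nat.succ_lt_succ j.isLt)),
        hVlt j.val (Nat.ne_of_lt j.isLt)]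
      exact hY'step (_root_.restrict zp T (Nat.le_succ T)) j x
    · simp only [Fin.val_last]
      rw [hYlt T (Nat.ne_of_lt (Nat.lt_succ_self T)), hY'F, hYT1, hVT]
      rw [restrict_all zp]
      have hzpeq : Fin.snoc (_root_.restrict zp T (Nat.le_succ T)) (zp (Fin.last T)) = zp :=
        Fin.snoc_init_self zp
      have hF2 : φ (_root_.restrict zp T (Nat.le_succ T)) x (zp (Fin.last T))
          = ∑ y, A x y * F zp y := by
        simp only [hφ]
        rw [hzpeq]
      rw [← hF2, hphi (_root_.restrict zp T (Nat.le_succ T)) x (zp (Fin.last T)), hG]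
      ring
/-- Optimal predictor representation: there is an optimal control `U^opt`
(with associated BSΔE solution `(Y^opt, V^opt)`) minimizing the dual cost, such
that `π_T(F) = μ(Y_0^opt) - ∑_t (U_t^opt)ᵀ e(Z_{t+1})` almost surely, and the
optimal cost equals the minimum mean-squared error `E[|F(X_T) - π_T(F)|²]`. -/
theorem optimal_predictor_representation (d m T : ℕ)
    (μ0 : Fin d → ℝ) (A : Matrix (Fin d) (Fin d) ℝ) (C : Fin d → Fin (m + 1) → ℝ)
    (hμ0 : ∀ x, 0 ≤ μ0 x) (hμ1 : ∑ x, μ0 x = 1)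
    (hA0 : ∀ x y, 0 ≤ A x y) (hA1 : ∀ x, ∑ y, A x y = 1)
    (hC0 : ∀ x z, 0 ≤ C x z) (hC1 : ∀ x, ∑ z, C x z = 1)
    (F : (Fin T → Fin (m + 1)) → Fin d → ℝ) :
    ∃ (Uopt : (t : ℕ) → (Fin t → Fin (m + 1)) → Fin m → ℝ)
      (Yopt : (t : ℕ) → (Fin t → Fin (m + 1)) → Fin d → ℝ)
      (Vopt : (t : ℕ) → (Fin t → Fin (m + 1)) → Fin d → Fin m → ℝ),
      SolvesBSDE d m T A C Uopt Yopt Vopt F ∧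
      -- optimality among all admissible controls (with their BSΔE solutions)
      (∀ U Y V, SolvesBSDE d m T A C U Y V F →
        Jcost d m T μ0 A C Uopt Yopt Vopt ≤ Jcost d m T μ0 A C U Y V) ∧
      -- representation of the conditional expectation, `P`-a.s.
      (∀ zp : Fin T → Fin (m + 1), PZ d m T μ0 A C zp ≠ 0 →
        piT d m T μ0 A C F zp =
          (∑ x, μ0 x * Yopt 0 (fun i => i.elim0) x) -
            ∑ t : Fin T, ∑ i,
              Uopt t.val (restrict zp t.val t.isLt.le) i * eVec m (zp t) i) ∧
      -- the optimal cost is the minimum mean-squared error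
      Jcost d m T μ0 A C Uopt Yopt Vopt =
        ∑ xp : Fin (T + 1) → Fin d, ∑ zp : Fin T → Fin (m + 1),
          hmmJoint d m T μ0 A C xp zp *
            (F zp (xp (Fin.last T)) - piT d m T μ0 A C F zp) ^ 2 := by

  obtain ⟨β, Uopt, hrep⟩ := repr_exists m T (piT d m T μ0 A C F)
  obtain ⟨Yopt, Vopt, hsol⟩ := bsde_exists d m A C T F Uopt
  obtain ⟨hlin, hquad⟩ := duality_main d m μ0 A C hμ1 hA1 hC1 T F Uopt Yopt Vopt hsol
  set μY := ∑ x, μ0 x * Yopt 0 (fun i => i.elim0) x with hμY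
  have hSp : ∀ zp : Fin T → Fin (m+1), Spath m T Uopt μY zp
      = piT d m T μ0 A C F zp + (μY - β) := by
    intro zp
    rw [hrep zp]
    unfold Spath
    ring
  have horth1 := orth d m T μ0 A C hμ0 hA0 hC0 F (fun _ => 1)
  have hmass := total_mass d m μ0 A C hμ1 hA1 hC1 T
  have hδ : μY - β = 0 := by
    have h1 : (∑ xp : Fin (T+1) → Fin d, ∑ zp : Fin T → Fin (m+1),
        hmmJoint d m T μ0 A C xp zp *
          ((F zp (xp (Fin.last T)) - piT d m T μ0 A C F zp) * 1
            - (μY - β) * 1)) = 0 := by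
      refine Eq.trans (Finset.sum_congr rfl fun xp _ =>
        Finset.sum_congr rfl fun zp _ => ?_) hlin
      rw [hSp zp]
      ring
    have h2 : (∑ xp : Fin (T+1) → Fin d, ∑ zp : Fin T → Fin (m+1),
        hmmJoint d m T μ0 A C xp zp *
          ((F zp (xp (Fin.last T)) - piT d m T μ0 A C F zp) * 1
            - (μY - β) * 1))
        = (∑ xp : Fin (T+1) → Fin d, ∑ zp : Fin T → Fin (m+1),
            hmmJoint d m T μ0 A C xp zp *
              ((F zp (xp (Fin.last T)) - piT d m T μ0 A C F zp) * 1))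
          - (μY - β) * ∑ xp : Fin (T+1) → Fin d, ∑ zp : Fin T → Fin (m+1),
              hmmJoint d m T μ0 A C xp zp := by
      rw [Finset.mul_sum]
      rw [← Finset.sum_sub_distrib]
      refine Finset.sum_congr rfl fun xp _ => ?_
      rw [Finset.mul_sum, ← Finset.sum_sub_distrib]
      refine Finset.sum_congr rfl fun zp _ => ?_
      ring
    rw [h2, horth1, hmass] at h1
    linarith
  have hS : ∀ zp : Fin T → Fin (m+1),
      Spath m T Uopt μY zp = piT d m T μ0 A C F zp := by
    intro zp
    rw [hSp zp, hδ, add_zero]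
  have hquad' : Jcost d m T μ0 A C Uopt Yopt Vopt
      = ∑ xp : Fin (T+1) → Fin d, ∑ zp : Fin T → Fin (m+1),
          hmmJoint d m T μ0 A C xp zp *
            (F zp (xp (Fin.last T)) - piT d m T μ0 A C F zp)^2 :=
    hquad.trans (Finset.sum_congr rfl fun xp _ =>
      Finset.sum_congr rfl fun zp _ => by rw [hS zp])
  refine ⟨Uopt, Yopt, Vopt, hsol, ?_, ?_, hquad'⟩
  · -- optimality
    intro U Y V hsolU
    obtain ⟨hlinU, hquadU⟩ := duality_main d m μ0 A C hμ1 hA1 hC1 T F U Y V hsolU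
    rw [hquadU, hquad']
    set SU := Spath m T U (∑ x, μ0 x * Y 0 (fun i => i.elim0) x) with hSU
    have horth2 := orth d m T μ0 A C hμ0 hA0 hC0 F
      (fun zp => piT d m T μ0 A C F zp - SU zp)
    have hsplit : (∑ xp : Fin (T+1) → Fin d, ∑ zp : Fin T → Fin (m+1),
        hmmJoint d m T μ0 A C xp zp * (F zp (xp (Fin.last T)) - SU zp)^2)
        = (∑ xp : Fin (T+1) → Fin d, ∑ zp : Fin T → Fin (m+1),
            hmmJoint d m T μ0 A C xp zp *
              (F zp (xp (Fin.last T)) - piT d m T μ0 A C F zp)^2)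
          + ((∑ xp : Fin (T+1) → Fin d, ∑ zp : Fin T → Fin (m+1),
              hmmJoint d m T μ0 A C xp zp *
                (piT d m T μ0 A C F zp - SU zp)^2)
            + 2 * ∑ xp : Fin (T+1) → Fin d, ∑ zp : Fin T → Fin (m+1),
                hmmJoint d m T μ0 A C xp zp *
                  ((F zp (xp (Fin.last T)) - piT d m T μ0 A C F zp) *
                    (piT d m T μ0 A C F zp - SU zp))) := by
      rw [Finset.mul_sum, ← Finset.sum_add_distrib, ← Finset.sum_add_distrib]
      refine Finset.sum_congr rfl fun xp _ => ?_
      rw [Finset.mul_sum, ← Finset.sum_add_distrib, ← Finset.sum_add_distrib]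
      refine Finset.sum_congr rfl fun zp _ => ?_
      ring
    rw [hsplit, horth2]
    have hnn : 0 ≤ ∑ xp : Fin (T+1) → Fin d, ∑ zp : Fin T → Fin (m+1),
        hmmJoint d m T μ0 A C xp zp * (piT d m T μ0 A C F zp - SU zp)^2 :=
      Finset.sum_nonneg fun xp _ => Finset.sum_nonneg fun zp _ =>
        mul_nonneg (hmmJoint_nonneg d m T μ0 A C hμ0 hA0 hC0 xp zp) (sq_nonneg _)
    linarith
  · -- representation
    intro zp _
    have h := (hS zp).symm
    unfold Spath at h
    exact h
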